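/- Let X be a topological space and x₀ ∈ X. Suppose X is SLTP at x₀ (every path α in X with α(0) = x₀ and α(1) ≠ x₀ is an SLT path) and suppose that for every open neighborhood U of x₀ the subgroup i_*π₁(U, x₀) is a normal subgroup of π₁(X, x₀), where i_* is induced by the inclusion U → X. Then X is a small loop transfer space at x₀. -/

import Mathlib

open TopologicalSpace

attribute [local instance] Path.Homotopic.setoid

/-- The homotopy class of a loop, as an element of the fundamental group. -/
noncomputable def loopClass {X : Type*} [TopologicalSpace X] {x : X} (γ : Path x x) :
    FundamentalGroup X x :=
  FundamentalGroup.fromPath (X := TopCat.of X) ⟦γ⟧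

/-- `α` is a small loop transfer (SLT) path: for every open neighborhood `U` of `α 0`
there is an open neighborhood `V` of `α 1` such that every loop at `α 1` inside `V` is
path-homotopic to some loop at `α 0` inside `U` conjugated along `α`. -/
def IsSLTPath {X : Type*} [TopologicalSpace X] {x₀ x₁ : X} (α : Path x₀ x₁) : Prop :=
  ∀ U : Set X, IsOpen U → x₀ ∈ U →
    ∃ V : Set X, IsOpen V ∧ x₁ ∈ V ∧
      ∀ γ : Path x₁ x₁, (∀ t, γ t ∈ V) →
        ∃ γ' : Path x₀ x₀, (∀ t, γ' t ∈ U) ∧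
          γ'.Homotopic ((α.trans γ).trans α.symm)

/-- `X` is a small loop transfer space at `x₀`: every path starting at `x₀` is an SLT path. -/
def IsSLTAt (X : Type*) [TopologicalSpace X] (x₀ : X) : Prop :=
  ∀ (x₁ : X) (α : Path x₀ x₁), IsSLTPath α

/-- `X` is SLTL at `x₀`: every loop based at `x₀` is an SLT path. -/
def IsSLTLAt (X : Type*) [TopologicalSpace X] (x₀ : X) : Prop :=
  ∀ γ : Path x₀ x₀, IsSLTPath γ

/-- `X` is SLTP at `x₀`: every non-loop path starting at `x₀` is an SLT path. -/
def IsSLTPAt (X : Type*) [TopologicalSpace X] (x₀ : X) : Prop :=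
  ∀ (x₁ : X) (α : Path x₀ x₁), x₁ ≠ x₀ → IsSLTPath α

/-- The set of homotopy classes of loops based at `x₀` with image contained in `U`;
this is the image `i₊π₁(U, x₀)` of the homomorphism induced by the inclusion `U → X`. -/
noncomputable def loopClassesIn {X : Type*} [TopologicalSpace X] (x₀ : X) (U : Set X) :
    Set (FundamentalGroup X x₀) :=
  { g | ∃ γ : Path x₀ x₀, (∀ t, γ t ∈ U) ∧ g = loopClass γ }

/-- The quotient topology on the fundamental group, coinduced by the map from the loop
space (with the compact-open topology) sending a loop to its homotopy class. -/
noncomputable def qtop (X : Type*) [TopologicalSpace X] (x₀ : X) :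
    TopologicalSpace (FundamentalGroup X x₀) :=
  coinduced (fun γ : Path x₀ x₀ => loopClass γ) inferInstance

/-- The whisker topology on the fundamental group, generated by the basis of cosets
`[α] · i₊π₁(U, x₀)` for `U` an open neighborhood of `x₀`. -/
noncomputable def whTop (X : Type*) [TopologicalSpace X] (x₀ : X) :
    TopologicalSpace (FundamentalGroup X x₀) :=
  generateFrom { S | ∃ (g : FundamentalGroup X x₀) (U : Set X), IsOpen U ∧ x₀ ∈ U ∧
      S = (fun h => g * h) '' loopClassesIn x₀ U }

/-- A loop based at `x` is small if every open neighborhood of `x` contains a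
representative of its homotopy class. -/
def IsSmallLoop {X : Type*} [TopologicalSpace X] {x : X} (γ : Path x x) : Prop :=
  ∀ U : Set X, IsOpen U → x ∈ U →
    ∃ δ : Path x x, (∀ t, δ t ∈ U) ∧ δ.Homotopic γ

/-- `π₁ˢ(X, x)`: the set of homotopy classes of small loops based at `x`. -/
noncomputable def pi1s {X : Type*} [TopologicalSpace X] (x : X) :
    Set (FundamentalGroup X x) :=
  { g | ∃ γ : Path x x, IsSmallLoop γ ∧ g = loopClass γ }

/-- `π₁ˢᵍ(X, x₀)`: the subgroup generated by classes `[α * β * α⁻¹]` where `α` is a path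
starting at `x₀` and `β` is a small loop based at `α 1`. -/
noncomputable def pi1sg {X : Type*} [TopologicalSpace X] (x₀ : X) :
    Subgroup (FundamentalGroup X x₀) :=
  Subgroup.closure { g | ∃ (x₁ : X) (α : Path x₀ x₁) (β : Path x₁ x₁), IsSmallLoop β ∧
      g = loopClass ((α.trans β).trans α.symm) }

/-- The path Spanier group of a path open cover `V` at `x₀`: the subgroup generated by the
classes `[α * β * α⁻¹]` where `α` is a path starting at `x₀` and `β` is a loop based at
`α 1` with image inside `V α`. -/
noncomputable def pathSpanierGroup {X : Type*} [TopologicalSpace X] (x₀ : X)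
    (V : ∀ x₁ : X, Path x₀ x₁ → Set X) : Subgroup (FundamentalGroup X x₀) :=
  Subgroup.closure { g | ∃ (x₁ : X) (α : Path x₀ x₁) (β : Path x₁ x₁),
      (∀ t, β t ∈ V x₁ α) ∧ g = loopClass ((α.trans β).trans α.symm) }

/-- `X` is small "small loop" transfer (SSLT) at `x₀`. -/
def IsSSLTAt (X : Type*) [TopologicalSpace X] (x₀ : X) : Prop :=
  ∀ (x₁ : X) (α : Path x₀ x₁) (U : Set X), IsOpen U → x₀ ∈ U →
    ∃ V : Set X, IsOpen V ∧ x₁ ∈ V ∧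
      ∀ β : Path x₁ x₁, IsSmallLoop β → (∀ t, β t ∈ V) →
        ∃ γ : Path x₀ x₀, (∀ t, γ t ∈ U) ∧
          γ.Homotopic ((α.trans β).trans α.symm)

/-- `X` is semilocally small generated: every point has an open neighborhood `U` with
`i₊π₁(U, x) ≤ π₁ˢᵍ(X, x)`. -/
noncomputable def SemilocallySmallGenerated (X : Type*) [TopologicalSpace X] : Prop :=
  ∀ x : X, ∃ U : Set X, IsOpen U ∧ x ∈ U ∧ loopClassesIn x U ⊆ (pi1sg x : Set (FundamentalGroup X x))

section LoopClass

variable {X : Type*} [TopologicalSpace X] {x : X}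

lemma loopClass_trans (γ δ : Path x x) : loopClass (γ.trans δ) = loopClass δ * loopClass γ :=
  rfl

lemma loopClass_symm (γ : Path x x) : loopClass γ.symm = (loopClass γ)⁻¹ :=
  rfl

lemma loopClass_eq_iff {γ δ : Path x x} : loopClass γ = loopClass δ ↔ γ.Homotopic δ :=
  Quotient.eq

lemma loopClass_conj (α γ : Path x x) :
    loopClass ((α.trans γ).trans α.symm) = (loopClass α)⁻¹ * loopClass γ * loopClass α := by
  rw [loopClass_trans, loopClass_trans, loopClass_symm, mul_assoc]

end LoopClass

/-- For a loop `α`, transferring along `α` is conjugation by `[α]⁻¹`, so `V = U` works. -/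
lemma isSLTPath_of_conj_mem_loopClassesIn {X : Type*} [TopologicalSpace X] {x₀ : X}
    (α : Path x₀ x₀)
    (hconj : ∀ U : Set X, IsOpen U → x₀ ∈ U → ∀ g ∈ loopClassesIn x₀ U,
      (loopClass α)⁻¹ * g * loopClass α ∈ loopClassesIn x₀ U) :
    IsSLTPath α := by
  intro U hU hx₀U
  refine ⟨U, hU, hx₀U, fun γ hγU => ?_⟩
  obtain ⟨γ', hγ'U, hγ'⟩ := hconj U hU hx₀U (loopClass γ) ⟨γ, hγU, rfl⟩
  exact ⟨γ', hγ'U, loopClass_eq_iff.mp (by rw [loopClass_conj, hγ'])⟩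

lemma isSLTLAt_of_normal {X : Type*} [TopologicalSpace X] {x₀ : X}
    (hnormal : ∀ U : Set X, IsOpen U → x₀ ∈ U →
      ∀ g : FundamentalGroup X x₀, ∀ h ∈ loopClassesIn x₀ U,
        g * h * g⁻¹ ∈ loopClassesIn x₀ U) :
    IsSLTLAt X x₀ := fun α =>
  isSLTPath_of_conj_mem_loopClassesIn α fun U hU hx₀U g hg => by
    simpa only [inv_inv] using hnormal U hU hx₀U (loopClass α)⁻¹ g hg

lemma isSLTAt_of_isSLTLAt_of_isSLTPAt {X : Type*} [TopologicalSpace X] {x₀ : X}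
    (hsltl : IsSLTLAt X x₀) (hsltp : IsSLTPAt X x₀) : IsSLTAt X x₀ := by
  intro x₁ α
  by_cases hx₁ : x₁ = x₀
  · subst hx₁
    exact hsltl α
  · exact hsltp x₁ α hx₁

/-- If `X` is SLTP at `x₀` and `i₊π₁(U, x₀)` is a normal subgroup of
`π₁(X, x₀)` for every open neighborhood `U` of `x₀`, then `X` is SLT at `x₀`. -/
theorem slt_of_sltp_of_normal {X : Type*} [TopologicalSpace X] (x₀ : X)
    (hsltp : IsSLTPAt X x₀)
    (hnormal : ∀ U : Set X, IsOpen U → x₀ ∈ U →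
      ∀ g : FundamentalGroup X x₀, ∀ h ∈ loopClassesIn x₀ U,
        g * h * g⁻¹ ∈ loopClassesIn x₀ U) :
    IsSLTAt X x₀ :=
  isSLTAt_of_isSLTLAt_of_isSLTPAt (isSLTLAt_of_normal hnormal) hsltp
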